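/- arXiv:1312.4649 — 4 statements merged into one kernel-verified Lean document; each statement's English description precedes it below -/
import Mathlib

section
/- For any two p×n quaternion matrices A and B, the Hadamard product satisfies ‖A ⋆ B‖₂ ≤ ‖A‖₂ · ‖B‖₂. -/
/-! The representation `ψ` is multiplicative and `ψ(q)` is `‖q‖` times a unitary matrix, so the
`j`-th block of `ψ(A ⋆ B) x` has norm at most `∑ₗ ‖A_{jl}‖ ‖B_{jl}‖ ‖xₗ‖`. Cauchy–Schwarz in `l`
then gives Schur's bound `‖A ⋆ B‖₂ ≤ (max row norm of A) · (max column norm of B)`, and every row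
and column of a quaternion matrix has Euclidean norm at most its 2-norm. -/

open scoped Quaternion Matrix
open MeasureTheory Filter Topology

noncomputable section

/-- The standard representation of a real quaternion `q = a + b·i + c·j + d·k` as the
`2 × 2` complex matrix `[[a+bi, c+di], [−c+di, a−bi]]`. -/
def quatToC2 (q : ℍ[ℝ]) : Matrix (Fin 2) (Fin 2) ℂ :=
  !![(q.re : ℂ) + q.imI * Complex.I, (q.imJ : ℂ) + q.imK * Complex.I;
     (-q.imJ : ℂ) + q.imK * Complex.I, (q.re : ℂ) - q.imI * Complex.I]

/-- Entrywise complex representation `ψ` of a quaternion matrix: a `p × n` quaternion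
matrix becomes a `2p × 2n` complex matrix. -/
def psi {p n : ℕ} (A : Matrix (Fin p) (Fin n) ℍ[ℝ]) :
    Matrix (Fin p × Fin 2) (Fin n × Fin 2) ℂ :=
  fun i j => quatToC2 (A i.1 j.1) i.2 j.2

/-- The 2-norm of a quaternion matrix: the L2 operator norm (i.e. the largest singular
value) of its complex representation `ψ(A)`. -/
def quatNorm2 {p n : ℕ} (A : Matrix (Fin p) (Fin n) ℍ[ℝ]) : ℝ :=
  ‖LinearMap.toContinuousLinearMap (Matrix.toEuclideanLin (psi A))‖

/-- The increasingly ordered eigenvalues of a Hermitian complex matrix (junk value `0`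
if the matrix is not Hermitian). -/
def sortedEigs {m : Type*} [Fintype m] [DecidableEq m] (M : Matrix m m ℂ) :
    Fin (Fintype.card m) → ℝ :=
  if h : M.IsHermitian then
    (h.eigenvalues ∘ (Fintype.equivFin m).symm) ∘
      Tuple.sort (h.eigenvalues ∘ (Fintype.equivFin m).symm)
  else 0

/-- `quatEig A k` is the `k`-th smallest eigenvalue (0-indexed) of a `p × p` quaternion
matrix `A` with `ψ(A)` Hermitian: the eigenvalues of `ψ(A)` come in coincident pairs, and
we take one from each pair, i.e. every other entry of the increasingly sorted list of the
`2p` eigenvalues of `ψ(A)`. -/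
def quatEig {p : ℕ} (A : Matrix (Fin p) (Fin p) ℍ[ℝ]) (k : Fin p) : ℝ :=
  sortedEigs (psi A) ⟨2 * k.val, by
    have h : Fintype.card (Fin p × Fin 2) = p * 2 := by simp
    have hk := k.isLt
    omega⟩

/-- `quatEigIdx A k` is `s_{k+1}(A)`, the `(k+1)`-st smallest eigenvalue of the quaternion
matrix `A` (0-indexed; junk value `0` if `k ≥ p`). -/
def quatEigIdx {p : ℕ} (A : Matrix (Fin p) (Fin p) ℍ[ℝ]) (k : ℕ) : ℝ :=
  if h : k < p then quatEig A ⟨k, h⟩ else 0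

lemma quatToC2_mul (q r : ℍ[ℝ]) : quatToC2 (q * r) = quatToC2 q * quatToC2 r := by
  ext a b
  fin_cases a <;> fin_cases b <;> apply Complex.ext <;>
    simp [quatToC2, Matrix.mul_apply] <;> ring

lemma quatToC2_star (q : ℍ[ℝ]) : quatToC2 (star q) = (quatToC2 q)ᴴ := by
  ext a b
  fin_cases a <;> fin_cases b <;> simp [quatToC2]

lemma sum_norm_sq_quatToC2_mulVec (q : ℍ[ℝ]) (v : Fin 2 → ℂ) :
    ∑ a, ‖(quatToC2 q *ᵥ v) a‖ ^ 2 = ‖q‖ ^ 2 * ∑ a, ‖v a‖ ^ 2 := by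
  rw [sq ‖q‖, ← Quaternion.normSq_eq_norm_mul_self, Quaternion.normSq_def']
  simp [quatToC2, Matrix.mulVec, dotProduct, ← Complex.normSq_eq_norm_sq, Complex.normSq_apply]
  ring

lemma norm_toLp_quatToC2_mulVec (q : ℍ[ℝ]) (v : Fin 2 → ℂ) :
    ‖WithLp.toLp 2 (quatToC2 q *ᵥ v)‖ = ‖q‖ * ‖WithLp.toLp 2 v‖ := by
  rw [← sq_eq_sq₀ (norm_nonneg _) (by positivity), mul_pow, EuclideanSpace.norm_sq_eq,
    EuclideanSpace.norm_sq_eq]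
  exact sum_norm_sq_quatToC2_mulVec q v

lemma sum_norm_sq_quatToC2_apply (q : ℍ[ℝ]) (b : Fin 2) :
    ∑ a, ‖quatToC2 q a b‖ ^ 2 = ‖q‖ ^ 2 := by
  have h := sum_norm_sq_quatToC2_mulVec q (Pi.single b 1)
  simp only [Matrix.mulVec_single_one, Pi.single_apply, apply_ite (‖·‖ ^ 2)] at h
  simpa using h

lemma EuclideanSpace.norm_sq_toLp_prod {𝕜 ι κ : Type*} [RCLike 𝕜] [Fintype ι] [Fintype κ]
    (v : ι × κ → 𝕜) :
    ‖WithLp.toLp 2 v‖ ^ 2 = ∑ i, ‖WithLp.toLp 2 fun k => v (i, k)‖ ^ 2 := by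
  simp only [EuclideanSpace.norm_sq_eq, Fintype.sum_prod_type]

lemma sum_sq_sum_mul_mul_le {ι κ : Type*} [Fintype ι] [Fintype κ] (a b : ι → κ → ℝ)
    (y : κ → ℝ) {R K : ℝ} (ha : ∀ j, ∑ l, a j l ^ 2 ≤ R ^ 2) (hb : ∀ l, ∑ j, b j l ^ 2 ≤ K ^ 2) :
    ∑ j, (∑ l, a j l * (b j l * y l)) ^ 2 ≤ (R * K) ^ 2 * ∑ l, y l ^ 2 :=
  calc ∑ j, (∑ l, a j l * (b j l * y l)) ^ 2
      ≤ ∑ j, R ^ 2 * ∑ l, b j l ^ 2 * y l ^ 2 := by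
        gcongr with j
        calc (∑ l, a j l * (b j l * y l)) ^ 2
            ≤ (∑ l, a j l ^ 2) * ∑ l, (b j l * y l) ^ 2 := Finset.sum_mul_sq_le_sq_mul_sq _ _ _
          _ ≤ R ^ 2 * ∑ l, b j l ^ 2 * y l ^ 2 := by simp only [mul_pow]; gcongr; exact ha j
    _ = R ^ 2 * ∑ l, (∑ j, b j l ^ 2) * y l ^ 2 := by
        simp only [← Finset.mul_sum, Finset.sum_mul]; rw [Finset.sum_comm]
    _ ≤ R ^ 2 * ∑ l, K ^ 2 * y l ^ 2 := by gcongr with l; exact hb l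
    _ = (R * K) ^ 2 * ∑ l, y l ^ 2 := by rw [← Finset.mul_sum]; ring

section L2OpNorm

open scoped Matrix.Norms.L2Operator

lemma Matrix.sum_norm_sq_apply_le_l2_opNorm_sq {𝕜 m n : Type*} [RCLike 𝕜] [Fintype m]
    [Fintype n] [DecidableEq n] (M : Matrix m n 𝕜) (c : n) :
    ∑ i, ‖M i c‖ ^ 2 ≤ ‖M‖ ^ 2 := by
  have h := M.l2_opNorm_mulVec (EuclideanSpace.single c 1)
  rw [PiLp.norm_single, norm_one, mul_one, ← sq_le_sq₀ (norm_nonneg _) (norm_nonneg _),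
    EuclideanSpace.norm_sq_eq] at h
  simpa [Matrix.mulVec_single_one] using h

variable {p n : ℕ}

lemma quatNorm2_eq_l2_opNorm (A : Matrix (Fin p) (Fin n) ℍ[ℝ]) : quatNorm2 A = ‖psi A‖ := rfl

lemma quatNorm2_nonneg (A : Matrix (Fin p) (Fin n) ℍ[ℝ]) : 0 ≤ quatNorm2 A :=
  norm_nonneg _

lemma psi_conjTranspose (A : Matrix (Fin p) (Fin n) ℍ[ℝ]) : psi Aᴴ = (psi A)ᴴ := by
  ext i j
  simp [psi, Matrix.conjTranspose_apply, quatToC2_star]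

lemma quatNorm2_conjTranspose (A : Matrix (Fin p) (Fin n) ℍ[ℝ]) :
    quatNorm2 Aᴴ = quatNorm2 A := by
  rw [quatNorm2_eq_l2_opNorm, quatNorm2_eq_l2_opNorm, psi_conjTranspose,
    Matrix.l2_opNorm_conjTranspose]

lemma sum_norm_sq_apply_le_quatNorm2_sq (A : Matrix (Fin p) (Fin n) ℍ[ℝ]) (l : Fin n) :
    ∑ j, ‖A j l‖ ^ 2 ≤ quatNorm2 A ^ 2 := by
  have h := (psi A).sum_norm_sq_apply_le_l2_opNorm_sq (l, 0)
  rw [quatNorm2_eq_l2_opNorm]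
  simpa only [Fintype.sum_prod_type, psi, sum_norm_sq_quatToC2_apply] using h

lemma sum_norm_sq_row_le_quatNorm2_sq (A : Matrix (Fin p) (Fin n) ℍ[ℝ]) (j : Fin p) :
    ∑ l, ‖A j l‖ ^ 2 ≤ quatNorm2 A ^ 2 := by
  simpa [Matrix.conjTranspose_apply, quatNorm2_conjTranspose] using
    sum_norm_sq_apply_le_quatNorm2_sq Aᴴ j

end L2OpNorm

section Hadamard

variable {p n : ℕ}

lemma psi_mulVec_block (A : Matrix (Fin p) (Fin n) ℍ[ℝ]) (x : Fin n × Fin 2 → ℂ) (j : Fin p) :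
    (fun a => (psi A *ᵥ x) (j, a)) = ∑ l, quatToC2 (A j l) *ᵥ fun b => x (l, b) := by
  ext a
  simp only [Matrix.mulVec, dotProduct, psi, Fintype.sum_prod_type, Finset.sum_apply]

lemma norm_psi_hadamard_mulVec_block_le (A B : Matrix (Fin p) (Fin n) ℍ[ℝ])
    (x : Fin n × Fin 2 → ℂ) (j : Fin p) :
    ‖WithLp.toLp 2 fun a => (psi (A ⊙ B) *ᵥ x) (j, a)‖
      ≤ ∑ l, ‖A j l‖ * (‖B j l‖ * ‖WithLp.toLp 2 fun b => x (l, b)‖) := by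
  rw [psi_mulVec_block, WithLp.toLp_sum]
  refine (norm_sum_le _ _).trans_eq (Finset.sum_congr rfl fun l _ => ?_)
  rw [Matrix.hadamard_apply, quatToC2_mul, ← Matrix.mulVec_mulVec, norm_toLp_quatToC2_mulVec,
    norm_toLp_quatToC2_mulVec]

lemma norm_psi_hadamard_mulVec_le (A B : Matrix (Fin p) (Fin n) ℍ[ℝ]) (x : Fin n × Fin 2 → ℂ) :
    ‖WithLp.toLp 2 (psi (A ⊙ B) *ᵥ x)‖ ≤ quatNorm2 A * quatNorm2 B * ‖WithLp.toLp 2 x‖ := by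
  have hAB := mul_nonneg (quatNorm2_nonneg A) (quatNorm2_nonneg B)
  rw [← sq_le_sq₀ (norm_nonneg _) (by positivity), mul_pow,
    EuclideanSpace.norm_sq_toLp_prod, EuclideanSpace.norm_sq_toLp_prod]
  calc _ ≤ ∑ j, (∑ l, ‖A j l‖ * (‖B j l‖ * ‖WithLp.toLp 2 fun b => x (l, b)‖)) ^ 2 := by
        gcongr with j
        exact norm_psi_hadamard_mulVec_block_le A B x j
    _ ≤ _ := sum_sq_sum_mul_mul_le _ _ _ (sum_norm_sq_row_le_quatNorm2_sq A)
        (sum_norm_sq_apply_le_quatNorm2_sq B)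

end Hadamard

/-- **Lemma 3.7.** For any two `p × n` quaternion matrices `A` and `B`, the entrywise
(Hadamard) product satisfies `‖A ⋆ B‖₂ ≤ ‖A‖₂ · ‖B‖₂`. -/
theorem hadamard_norm_le {p n : ℕ} (A B : Matrix (Fin p) (Fin n) ℍ[ℝ]) :
    quatNorm2 (Matrix.of fun j l => A j l * B j l) ≤ quatNorm2 A * quatNorm2 B :=
  ContinuousLinearMap.opNorm_le_bound _ (mul_nonneg (quatNorm2_nonneg A) (quatNorm2_nonneg B))
    fun x => norm_psi_hadamard_mulVec_le A B x.ofLp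

end
end

section
/- Let h₁,…,h_n be independent real random variables with E h_v = 0, |h_v| ≤ b almost surely, and E h_v² ≤ M for all v, where b, M > 0. Then for every integer m ≥ 1, E( (n^{−1} Σ_{v=1}^n h_v)^{2m} ) ≤ Σ_{k=1}^m (3Mk/n)^k · (bk/n)^{2(m−k)}. -/
/-!
Expand `(∑ v, h v)^(2m)` by the multinomial theorem and integrate term by term using
independence. A multi-index `k` with some `k v = 1` contributes nothing since `E h_v = 0`;
otherwise every `k v` on its support `s` is at least `2`, so `1 ≤ #s ≤ m`, and
`|E h_v^(k v)| ≤ M b^(k v - 2)` bounds the term by `multinomial k · M^#s b^(2m - 2#s)`.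
The multinomial coefficients of the `k` supported exactly on `s` add up to at most `#s^(2m)`,
so the `C(n, j)` sets with `#s = j` contribute at most `C(n, j) j^(2m) M^j b^(2m - 2j)`;
finally `C(n, j) j^j ≤ n^j j^j / j! ≤ (e n)^j ≤ (3 n)^j`.
-/

open MeasureTheory Finset ProbabilityTheory

lemma choose_mul_pow_self_le (n j : ℕ) : (n.choose j : ℝ) * j ^ j ≤ (3 * n) ^ j := by
  have hexp : Real.exp j ≤ 3 ^ j := by
    rw [← Real.exp_one_pow]
    exact pow_le_pow_left₀ (Real.exp_pos 1).le Real.exp_one_lt_three.le j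
  calc (n.choose j : ℝ) * j ^ j ≤ n ^ j / j.factorial * j ^ j := by
        gcongr; exact Nat.choose_le_pow_div j n
    _ = n ^ j * (j ^ j / j.factorial) := by ring
    _ ≤ n ^ j * 3 ^ j := by
        gcongr; exact (Real.pow_div_factorial_le_exp _ (Nat.cast_nonneg _) j).trans hexp
    _ = (3 * n) ^ j := by ring

lemma inv_pow_mul_choose_mul_le {n j m : ℕ} (hn : n ≠ 0) (hjm : j ≤ m) {M b : ℝ} (hM : 0 ≤ M) :
    (n : ℝ)⁻¹ ^ (2 * m) * ((n.choose j : ℝ) * j ^ (2 * m) * (M ^ j * b ^ (2 * (m - j)))) ≤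
      (3 * M * j / n) ^ j * (b * j / n) ^ (2 * (m - j)) := by
  obtain ⟨d, rfl⟩ := Nat.exists_eq_add_of_le hjm
  rw [Nat.add_sub_cancel_left]
  have hb : 0 ≤ b ^ (2 * d) := (even_two_mul d).pow_nonneg b
  set R : ℝ := (n : ℝ)⁻¹ ^ (2 * (j + d)) * j ^ (j + 2 * d) * M ^ j * b ^ (2 * d)
  calc _ = ((n.choose j : ℝ) * j ^ j) * R := by ring
    _ ≤ (3 * n) ^ j * R := by gcongr; exact choose_mul_pow_self_le n j
    _ = (3 * M * j / n) ^ j * (b * j / n) ^ (2 * d) := by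
        have hcancel : (n : ℝ) ^ j * (n : ℝ)⁻¹ ^ j = 1 := by
          rw [← mul_pow, mul_inv_cancel₀ (Nat.cast_ne_zero.2 hn), one_pow]
        linear_combination (3 ^ j * (n : ℝ)⁻¹ ^ j * (n : ℝ)⁻¹ ^ (2 * d) * j ^ (j + 2 * d) * M ^ j *
          b ^ (2 * d)) * hcancel

section Combinatorics

variable {ι : Type*} [Fintype ι] [DecidableEq ι]

lemma card_support_mem_Icc_of_ne_one {m : ℕ} (hm : 1 ≤ m) {k : ι → ℕ}
    (hk : k ∈ piAntidiag (univ : Finset ι) (2 * m)) (hk1 : ∀ v, k v ≠ 1) :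
    #{v | k v ≠ 0} ∈ Icc 1 m := by
  have hsum : ∑ v ∈ {v | k v ≠ 0}, k v = 2 * m := by
    rw [sum_filter_ne_zero]; exact (mem_piAntidiag.1 hk).1
  have hcard : #{v | k v ≠ 0} * 2 ≤ 2 * m := hsum ▸ card_nsmul_le_sum _ _ 2 fun v hv => by
    have := (mem_filter.1 hv).2; have := hk1 v; omega
  have hne : ({v | k v ≠ 0} : Finset ι).Nonempty := by
    refine nonempty_iff_ne_empty.2 fun h => ?_
    rw [h, sum_empty] at hsum; omega
  exact mem_Icc.2 ⟨hne.card_pos, by omega⟩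

lemma sum_multinomial_support_eq_le (N : ℕ) (s : Finset ι) :
    ∑ k ∈ piAntidiag (univ : Finset ι) N with univ.filter (k · ≠ 0) = s,
      Nat.multinomial univ k ≤ #s ^ N := by
  calc _ = ∑ k ∈ piAntidiag (univ : Finset ι) N with univ.filter (k · ≠ 0) = s,
        Nat.multinomial s k := by
        refine sum_congr rfl fun k hk => (Nat.multinomial_congr_of_sdiff (subset_univ s)
          (fun v hv => ?_) fun _ _ => rfl).symm
        obtain ⟨-, rfl⟩ := mem_filter.1 hk
        simpa using (mem_sdiff.1 hv).2
    _ ≤ ∑ k ∈ piAntidiag s N, Nat.multinomial s k := by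
        refine sum_le_sum_of_subset fun k hk => ?_
        obtain ⟨hkN, rfl⟩ := mem_filter.1 hk
        refine mem_piAntidiag.2 ⟨?_, fun v hv => by simpa using hv⟩
        rw [sum_filter_ne_zero]; exact (mem_piAntidiag.1 hkN).1
    _ = #s ^ N := by
        have := sum_pow_eq_sum_piAntidiag s (fun _ => (1 : ℕ)) N
        simp only [one_pow, prod_const_one, mul_one, Nat.cast_id, sum_const, smul_eq_mul] at this
        exact this.symm

lemma sum_multinomial_mul_le {m : ℕ} (hm : 1 ≤ m) {F : ℕ → ℝ} (hF : ∀ j, 0 ≤ F j) :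
    ∑ k ∈ piAntidiag (univ : Finset ι) (2 * m) with ∀ v, k v ≠ 1,
        (Nat.multinomial univ k : ℝ) * F #{v | k v ≠ 0} ≤
      ∑ j ∈ Icc 1 m, ((Fintype.card ι).choose j : ℝ) * j ^ (2 * m) * F j := by
  have hfiber (s : Finset ι) :
      ∑ k ∈ piAntidiag (univ : Finset ι) (2 * m) with (∀ v, k v ≠ 1) ∧ univ.filter (k · ≠ 0) = s,
          (Nat.multinomial univ k : ℝ) * F #{v | k v ≠ 0} ≤
        if #s ∈ Icc 1 m then (#s : ℝ) ^ (2 * m) * F #s else 0 := by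
    split_ifs with hs
    · calc _ ≤ ∑ k ∈ piAntidiag (univ : Finset ι) (2 * m) with univ.filter (k · ≠ 0) = s,
            (Nat.multinomial univ k : ℝ) * F #s := by
            rw [sum_congr rfl fun k hk => by rw [(mem_filter.1 hk).2.2]]
            refine sum_le_sum_of_subset_of_nonneg (fun k => ?_) fun k _ _ => ?_
            · simp only [mem_filter]; tauto
            · have := hF #s; positivity
        _ = (∑ k ∈ piAntidiag (univ : Finset ι) (2 * m) with univ.filter (k · ≠ 0) = s,
            Nat.multinomial univ k : ℕ) * F #s := by
            rw [Nat.cast_sum, sum_mul]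
        _ ≤ (#s : ℝ) ^ (2 * m) * F #s := by
            gcongr
            · exact hF _
            · exact_mod_cast sum_multinomial_support_eq_le (2 * m) s
    · refine (sum_eq_zero fun k hk => ?_).le
      obtain ⟨hkN, hk1, rfl⟩ := mem_filter.1 hk
      exact absurd (card_support_mem_Icc_of_ne_one hm hkN hk1) hs
  calc _ = ∑ s ∈ univ.powerset, ∑ k ∈ piAntidiag (univ : Finset ι) (2 * m) with
          (∀ v, k v ≠ 1) ∧ univ.filter (k · ≠ 0) = s,
          (Nat.multinomial univ k : ℝ) * F #{v | k v ≠ 0} := by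
        simp_rw [← filter_filter]
        exact (sum_fiberwise_of_maps_to (fun k _ => mem_powerset.2 (subset_univ _)) _).symm
    _ ≤ ∑ s ∈ univ.powerset, if #s ∈ Icc 1 m then (#s : ℝ) ^ (2 * m) * F #s else 0 :=
        sum_le_sum fun s _ => hfiber s
    _ = ∑ j ∈ range (Fintype.card ι + 1) ∩ Icc 1 m,
          ((Fintype.card ι).choose j : ℝ) * j ^ (2 * m) * F j := by
        rw [sum_powerset_apply_card (fun j => if j ∈ Icc 1 m then (j : ℝ) ^ (2 * m) * F j else 0),
          card_univ, ← sum_ite_mem]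
        refine sum_congr rfl fun j _ => ?_
        split_ifs <;> simp [nsmul_eq_mul, mul_assoc]
    _ ≤ ∑ j ∈ Icc 1 m, ((Fintype.card ι).choose j : ℝ) * j ^ (2 * m) * F j :=
        sum_le_sum_of_subset_of_nonneg inter_subset_right fun j _ _ => by
          have := hF j; positivity

end Combinatorics

section Moments

variable {Ω : Type*} [MeasurableSpace Ω] {μ : Measure Ω} {b : ℝ}

lemma abs_integral_pow_le [IsFiniteMeasure μ] {X : Ω → ℝ} (hX : AEStronglyMeasurable X μ)
    (hbound : ∀ᵐ ω ∂μ, |X ω| ≤ b) {k : ℕ} (hk : 2 ≤ k) :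
    |∫ ω, X ω ^ k ∂μ| ≤ (∫ ω, X ω ^ 2 ∂μ) * b ^ (k - 2) := by
  have hsq : Integrable (fun ω => X ω ^ 2) μ :=
    .of_bound (hX.pow 2) (b ^ 2) <| hbound.mono fun ω hω => by
      rw [Real.norm_eq_abs, abs_pow]; exact pow_le_pow_left₀ (abs_nonneg _) hω 2
  calc |∫ ω, X ω ^ k ∂μ| ≤ ∫ ω, |X ω ^ k| ∂μ := abs_integral_le_integral_abs
    _ ≤ ∫ ω, X ω ^ 2 * b ^ (k - 2) ∂μ := by
        refine integral_mono_of_nonneg (.of_forall fun _ => abs_nonneg _) (hsq.mul_const _) ?_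
        filter_upwards [hbound] with ω hω
        rw [abs_pow, ← Nat.add_sub_of_le hk, pow_add, sq_abs, Nat.add_sub_cancel_left]
        exact mul_le_mul_of_nonneg_left (pow_le_pow_left₀ (abs_nonneg _) hω _) (sq_nonneg _)
    _ = (∫ ω, X ω ^ 2 ∂μ) * b ^ (k - 2) := integral_mul_const _ _

variable {ι : Type*} [Fintype ι] {X : ι → Ω → ℝ}

lemma integrable_prod_pow_of_abs_le [IsFiniteMeasure μ] (hX : ∀ v, AEStronglyMeasurable (X v) μ)
    (hbound : ∀ v, ∀ᵐ ω ∂μ, |X v ω| ≤ b) (k : ι → ℕ) :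
    Integrable (fun ω => ∏ v, X v ω ^ k v) μ := by
  refine .of_bound (Finset.aestronglyMeasurable_fun_prod _ fun v _ => (hX v).pow _)
    (∏ v, b ^ k v) ?_
  filter_upwards [ae_all_iff.2 hbound] with ω hω
  rw [Real.norm_eq_abs, abs_prod]
  exact prod_le_prod (fun _ _ => abs_nonneg _) fun v _ => by
    rw [abs_pow]; exact pow_le_pow_left₀ (abs_nonneg _) (hω v) _

lemma integral_sum_pow_eq [DecidableEq ι] [IsProbabilityMeasure μ] (hX : ∀ v, Measurable (X v))
    (hindep : iIndepFun X μ) (hbound : ∀ v, ∀ᵐ ω ∂μ, |X v ω| ≤ b) (N : ℕ) :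
    ∫ ω, (∑ v, X v ω) ^ N ∂μ =
      ∑ k ∈ piAntidiag univ N, (Nat.multinomial univ k : ℝ) * ∏ v, ∫ ω, X v ω ^ k v ∂μ := by
  simp_rw [sum_pow_eq_sum_piAntidiag]
  rw [integral_finsetSum _ fun k _ =>
    (integrable_prod_pow_of_abs_le (fun v => (hX v).aestronglyMeasurable) hbound k).const_mul _]
  refine sum_congr rfl fun k _ => ?_
  rw [integral_const_mul]
  congr 1
  exact (hindep.comp (fun v x => x ^ k v) fun v => measurable_id.pow_const _
    ).integral_fun_prod_eq_prod_integral fun v => ((hX v).pow_const _).aestronglyMeasurable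

lemma prod_integral_pow_le [IsProbabilityMeasure μ] (hX : ∀ v, AEStronglyMeasurable (X v) μ)
    (hbound : ∀ v, ∀ᵐ ω ∂μ, |X v ω| ≤ b) {M : ℝ} (hvar : ∀ v, ∫ ω, X v ω ^ 2 ∂μ ≤ M) (hb : 0 ≤ b)
    {k : ι → ℕ} (hk1 : ∀ v, k v ≠ 1) :
    ∏ v, ∫ ω, X v ω ^ k v ∂μ ≤ M ^ #{v | k v ≠ 0} * b ^ (∑ v, k v - 2 * #{v | k v ≠ 0}) := by
  set s : Finset ι := {v | k v ≠ 0}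
  have hk2 : ∀ v ∈ s, 2 ≤ k v := fun v hv => by
    have := (mem_filter.1 hv).2; have := hk1 v; omega
  have hexp : ∑ v ∈ s, (k v - 2) = ∑ v, k v - 2 * #s := by
    rw [sum_tsub_distrib s hk2, sum_filter_ne_zero, sum_const, smul_eq_mul, mul_comm]
  calc ∏ v, ∫ ω, X v ω ^ k v ∂μ = ∏ v ∈ s, ∫ ω, X v ω ^ k v ∂μ := by
        refine (prod_subset (subset_univ s) fun v _ hv => ?_).symm
        have hv0 : k v = 0 := by simpa [s] using hv
        simp [hv0]
    _ ≤ ∏ v ∈ s, |∫ ω, X v ω ^ k v ∂μ| := (le_abs_self _).trans (abs_prod _ _).le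
    _ ≤ ∏ v ∈ s, M * b ^ (k v - 2) := prod_le_prod (fun _ _ => abs_nonneg _) fun v hv =>
        (abs_integral_pow_le (hX v) (hbound v) (hk2 v hv)).trans
          (mul_le_mul_of_nonneg_right (hvar v) (pow_nonneg hb _))
    _ = M ^ #s * b ^ (∑ v, k v - 2 * #s) := by
        rw [prod_mul_distrib, prod_const, prod_pow_eq_pow_sum, hexp]

lemma integral_sum_pow_le [DecidableEq ι] [IsProbabilityMeasure μ] (hX : ∀ v, Measurable (X v))
    (hindep : iIndepFun X μ) (hmean : ∀ v, ∫ ω, X v ω ∂μ = 0) (hbound : ∀ v, ∀ᵐ ω ∂μ, |X v ω| ≤ b)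
    {M : ℝ} (hvar : ∀ v, ∫ ω, X v ω ^ 2 ∂μ ≤ M) (hb : 0 ≤ b) (hM : 0 ≤ M) {m : ℕ} (hm : 1 ≤ m) :
    ∫ ω, (∑ v, X v ω) ^ (2 * m) ∂μ ≤
      ∑ j ∈ Icc 1 m,
        ((Fintype.card ι).choose j : ℝ) * j ^ (2 * m) * (M ^ j * b ^ (2 * (m - j))) := by
  rw [integral_sum_pow_eq hX hindep hbound]
  refine le_trans ?_ (sum_multinomial_mul_le hm fun j => by positivity)
  rw [sum_filter]
  refine sum_le_sum fun k hk => ?_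
  split_ifs with hk1
  · have hexp : ∑ v, k v - 2 * #{v | k v ≠ 0} = 2 * (m - #{v | k v ≠ 0}) := by
      rw [(mem_piAntidiag.1 hk).1]; omega
    gcongr
    exact hexp ▸ prod_integral_pow_le (fun v => (hX v).aestronglyMeasurable) hbound hvar hb hk1
  · obtain ⟨v, hv⟩ := not_forall_not.1 hk1
    rw [prod_eq_zero (mem_univ v) (by simp [hv, hmean]), mul_zero]

end Moments

/-- **(4.7)-type moment bound.** Let `h₁,…,h_n` be independent real random variables with
`E h_v = 0`, `|h_v| ≤ b` a.s. and `E h_v² ≤ M`.  Then for every integer `m ≥ 1`,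
`E((n⁻¹ Σ_v h_v)^{2m}) ≤ Σ_{k=1}^m (3Mk/n)^k (bk/n)^{2(m−k)}`. -/
theorem moment_bound_sum_bounded
    {Ω : Type*} [MeasurableSpace Ω] (μ : Measure Ω) [IsProbabilityMeasure μ]
    {n : ℕ} (hn : 1 ≤ n) (h : Fin n → Ω → ℝ) (b M : ℝ) (hb : 0 < b) (hM : 0 < M)
    (hmeas : ∀ v, Measurable (h v))
    (hindep : ProbabilityTheory.iIndepFun h μ)
    (hmean : ∀ v, ∫ ω, h v ω ∂μ = 0)
    (hbound : ∀ v, ∀ᵐ ω ∂μ, |h v ω| ≤ b)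
    (hvar : ∀ v, ∫ ω, h v ω ^ 2 ∂μ ≤ M)
    (m : ℕ) (hm : 1 ≤ m) :
    ∫ ω, ((n : ℝ)⁻¹ * ∑ v, h v ω) ^ (2 * m) ∂μ ≤
      ∑ k ∈ Finset.Icc 1 m,
        (3 * M * (k : ℝ) / n) ^ k * (b * (k : ℝ) / n) ^ (2 * (m - k)) := by
  calc ∫ ω, ((n : ℝ)⁻¹ * ∑ v, h v ω) ^ (2 * m) ∂μ
      = (n : ℝ)⁻¹ ^ (2 * m) * ∫ ω, (∑ v, h v ω) ^ (2 * m) ∂μ := by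
        simp_rw [mul_pow]; exact integral_const_mul _ _
    _ ≤ (n : ℝ)⁻¹ ^ (2 * m) *
          ∑ j ∈ Icc 1 m, (n.choose j : ℝ) * j ^ (2 * m) * (M ^ j * b ^ (2 * (m - j))) := by
        gcongr
        simpa using integral_sum_pow_le hmeas hindep hmean hbound hvar hb.le hM.le hm
    _ ≤ ∑ j ∈ Icc 1 m, (3 * M * (j : ℝ) / n) ^ j * (b * (j : ℝ) / n) ^ (2 * (m - j)) := by
        rw [mul_sum]
        exact sum_le_sum fun j hj =>
          inv_pow_mul_choose_mul_le (by omega) (mem_Icc.1 hj).2 hM.le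
end

section
/- Let {x_{jl} : j, l ≥ 1} be a double array of quaternion random variables on a common probability space and p = p(n) with p/n → y ∈ (0,∞), and suppose there exist a real random variable ξ with E ξ⁴ < ∞ and a constant L such that for every n ≥ 1 and every δ > 0, (np)^{−1} Σ_{j≤p, l≤n} P(‖x_{jl}‖ > δ√n) ≤ L·P(|ξ| > δ√n). Then there exists a sequence of positive reals δ_n → 0 with δ_n√n nondecreasing to ∞ such that, with probability one, only finitely many n satisfy ‖x_{jl}‖ > δ_n√n for some j ≤ p, l ≤ n (i.e. P(max_{j≤p, l≤n} ‖x_{jl}‖ > δ_n√n infinitely often) = 0). -/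
open scoped Quaternion Matrix
open MeasureTheory Filter Topology

noncomputable section

instance : MeasurableSpace ℍ[ℝ] := borel ℍ[ℝ]
instance : BorelSpace ℍ[ℝ] := ⟨rfl⟩

/-! The tail condition bounds the probability that some `‖x_{jl}‖`, `j < p(N)`, `l < N`, exceeds
`t` by `N p(N) |L| P(|ξ| > t)`.  On the dyadic block `N = 2^{m+2}` and at level
`t = ε √(2^m)` this is `O(4^m P(ξ⁴ > ε⁴ 4^m))`, which is summable in `m` for each fixed `ε > 0`
because `E ξ⁴ < ∞` (Cauchy condensation of `∑ P(ξ⁴ > k)`).  A diagonal argument lets `ε = ε_m`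
tend to `0` slowly enough (by steps `1/k → 1/(k+1)`) that the series still converges, and
Borel–Cantelli over the blocks gives the almost sure bound with `δ_n √n = ε_m √(2^m)` for
`2^m ≤ n < 2^{m+1}`. -/

open scoped ENNReal

section Moments

variable {Ω : Type*} [MeasurableSpace Ω] {μ : Measure Ω} [IsProbabilityMeasure μ]

theorem tsum_two_pow_mul_measure_lt_ne_top {Y : Ω → ℝ} (hY : Integrable Y μ) (hY0 : 0 ≤ Y) :
    ∑' k : ℕ, 2 ^ k * μ {ω | (2 : ℝ) ^ k < Y ω} ≠ ∞ := by
  let f : ℕ → ℝ≥0∞ := fun k => μ {ω | (k : ℝ) < Y ω}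
  have hf : ∑' k, f k ≠ ∞ :=
    (@ProbabilityTheory.tsum_prob_mem_Ioi_lt_top Ω ⟨μ⟩ ‹_› Y hY hY0).ne
  have hcond := ENNReal.tsum_condensed_le (f := f) fun m n _ hmn =>
    measure_mono fun ω (hω : (n : ℝ) < Y ω) => (Nat.cast_le.2 hmn).trans_lt hω
  refine ne_top_of_le_ne_top ?_ (le_of_eq_of_le ?_ hcond)
  · exact ENNReal.add_ne_top.2 ⟨measure_ne_top μ _, ENNReal.mul_ne_top ENNReal.ofNat_ne_top hf⟩
  · simp only [f, Nat.cast_pow, Nat.cast_ofNat]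

theorem tsum_four_pow_mul_measure_lt_abs_ne_top {ξ : Ω → ℝ}
    (hξ4 : Integrable (fun ω => |ξ ω| ^ 4) μ) {b : ℝ} (hb : 0 < b) :
    ∑' m : ℕ, 4 ^ m * μ {ω | √(2 ^ m) / b < |ξ ω|} ≠ ∞ := by
  have hset : ∀ m : ℕ,
      {ω | √(2 ^ m) / b < |ξ ω|} = {ω | (2 : ℝ) ^ (2 * m) < b ^ 4 * |ξ ω| ^ 4} := by
    intro m
    ext ω
    have h4 : (√(2 ^ m) / b) ^ 4 = (2 : ℝ) ^ (2 * m) / b ^ 4 := by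
      rw [div_pow, show 4 = 2 * 2 from rfl, pow_mul, Real.sq_sqrt (by positivity), ← pow_mul,
        mul_comm m]
    simp only [Set.mem_ofPred_eq]
    rw [← pow_lt_pow_iff_left₀ (by positivity) (abs_nonneg _) four_ne_zero, h4,
      div_lt_iff₀' (by positivity)]
  have hsub := ENNReal.tsum_comp_le_tsum_of_injective (mul_right_injective₀ two_ne_zero)
    fun k : ℕ => 2 ^ k * μ {ω | (2 : ℝ) ^ k < b ^ 4 * |ξ ω| ^ 4}
  refine ne_top_of_le_ne_top ?_ (le_of_eq_of_le ?_ hsub)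
  · exact tsum_two_pow_mul_measure_lt_ne_top (hξ4.const_mul _) fun ω => by positivity
  · simp only [hset, pow_mul]
    norm_num

end Moments

def lagIndex (g : ℕ → ℕ) : ℕ → ℕ
  | 0 => 0
  | m + 1 => if g (lagIndex g m + 1) ≤ m + 1 then lagIndex g m + 1 else lagIndex g m

section lagIndex

variable (g : ℕ → ℕ)

theorem lagIndex_le_succ (m : ℕ) : lagIndex g m ≤ lagIndex g (m + 1) := by
  simp only [lagIndex]; split_ifs <;> omega

theorem lagIndex_succ_le (m : ℕ) : lagIndex g (m + 1) ≤ lagIndex g m + 1 := by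
  simp only [lagIndex]; split_ifs <;> omega

theorem monotone_lagIndex : Monotone (lagIndex g) :=
  monotone_nat_of_le_succ (lagIndex_le_succ g)

theorem le_of_lagIndex_ne_zero : ∀ m, lagIndex g m ≠ 0 → g (lagIndex g m) ≤ m
  | 0, h => absurd rfl h
  | m + 1, h => by
    simp only [lagIndex] at h ⊢
    split_ifs at h ⊢ with hg
    · exact hg
    · exact (le_of_lagIndex_ne_zero m h).trans m.le_succ

theorem tendsto_lagIndex : Tendsto (lagIndex g) atTop atTop := by
  refine (monotone_lagIndex g).tendsto_atTop_atTop fun k => ?_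
  induction k with
  | zero => exact ⟨0, Nat.zero_le _⟩
  | succ k ih =>
    obtain ⟨m, hm⟩ := ih
    set m' := max m (g (k + 1))
    have hk : k ≤ lagIndex g m' := hm.trans (monotone_lagIndex g (le_max_left _ _))
    refine ⟨m' + 1, ?_⟩
    rcases hk.lt_or_eq with hlt | heq
    · exact hlt.trans_le (lagIndex_le_succ g m')
    · simp only [lagIndex, ← heq]
      rw [if_pos (by omega)]

end lagIndex

theorem ENNReal.exists_tendsto_atTop_tsum_ne_top (a : ℕ → ℕ → ℝ≥0∞)
    (ha : ∀ k, ∑' m, a k m ≠ ∞) :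
    ∃ κ : ℕ → ℕ, (∀ m, κ (m + 1) ≤ κ m + 1) ∧ Tendsto κ atTop atTop ∧
      ∑' m, a (κ m) m ≠ ∞ := by
  have htail : ∀ k, ∃ N, ∑' m, a k (m + N) ≤ 2⁻¹ ^ k := fun k =>
    (((tendsto_order.1 (ENNReal.tendsto_sum_nat_add _ (ha k))).2 _
      (ENNReal.pow_pos (by norm_num) k)).exists).imp fun _ => le_of_lt
  choose g hg using htail
  refine ⟨lagIndex g, lagIndex_succ_le g, tendsto_lagIndex g, ?_⟩
  have hblock : ∀ k, ∑' m, (if lagIndex g m = k then a k m else 0) ≤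
      (Pi.single 0 (∑' m, a 0 m) : ℕ → ℝ≥0∞) k + 2⁻¹ ^ k := by
    intro k
    rcases eq_or_ne k 0 with rfl | hk
    · refine le_add_right (ENNReal.tsum_le_tsum fun m => ?_)
      split_ifs <;> simp
    · have hvanish : ∀ m < g k, (if lagIndex g m = k then a k m else 0) = 0 := fun m hm =>
        if_neg fun h => by subst h; have := le_of_lagIndex_ne_zero g m hk; omega
      rw [← ENNReal.summable.sum_add_tsum_nat_add' (k := g k),
        Finset.sum_eq_zero fun m hm => hvanish m (Finset.mem_range.1 hm), zero_add]
      refine le_add_left ((ENNReal.tsum_le_tsum fun m => ?_).trans (hg k))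
      split_ifs <;> simp
  refine ne_top_of_le_ne_top (ENNReal.add_ne_top.2 ⟨ha 0, ENNReal.ofNat_ne_top (n := 2)⟩) ?_
  calc ∑' m, a (lagIndex g m) m
      = ∑' m, ∑' k, if lagIndex g m = k then a k m else 0 := by
        simp only [eq_comm (a := lagIndex g _), tsum_ite_eq]
    _ = ∑' k, ∑' m, if lagIndex g m = k then a k m else 0 := ENNReal.tsum_comm
    _ ≤ ∑' k, ((Pi.single 0 (∑' m, a 0 m) : ℕ → ℝ≥0∞) k + 2⁻¹ ^ k) :=
        ENNReal.tsum_le_tsum hblock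
    _ = ∑' m, a 0 m + 2 := by
        rw [ENNReal.tsum_add, tsum_pi_single, ENNReal.tsum_geometric, ENNReal.one_sub_inv_two,
          inv_inv]

theorem tendsto_natLog_atTop {b : ℕ} (hb : 1 < b) : Tendsto (Nat.log b) atTop atTop :=
  Nat.log_monotone.tendsto_atTop_atTop fun k => ⟨b ^ k, (Nat.log_pow hb k).ge⟩

-- The offset `3` keeps the ratio of consecutive levels above `3√2/4 > 1` when `κ` moves up.
def dyadicLevel (κ : ℕ → ℕ) (m : ℕ) : ℝ := √(2 ^ m) / (κ m + 3)

section dyadicLevel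

variable {κ : ℕ → ℕ}

variable (κ) in
theorem dyadicLevel_pos (m : ℕ) : 0 < dyadicLevel κ m := by
  unfold dyadicLevel; positivity

theorem one_lt_three_div_four_mul_sqrt_two : 1 < 3 / 4 * √2 := by
  have : (4 / 3 : ℝ) < √2 := Real.lt_sqrt_of_sq_lt (by norm_num)
  linarith

theorem mul_dyadicLevel_le_succ (hκ : ∀ m, κ (m + 1) ≤ κ m + 1) (m : ℕ) :
    3 / 4 * √2 * dyadicLevel κ m ≤ dyadicLevel κ (m + 1) := by
  have hκm : ((κ (m + 1) : ℕ) : ℝ) ≤ κ m + 1 := by exact_mod_cast hκ m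
  rw [dyadicLevel, dyadicLevel, pow_succ, Real.sqrt_mul (by positivity), mul_div_assoc',
    div_le_div_iff₀ (by positivity) (by positivity)]
  have : 0 ≤ √(2 ^ m) * √2 := by positivity
  nlinarith

theorem monotone_dyadicLevel (hκ : ∀ m, κ (m + 1) ≤ κ m + 1) : Monotone (dyadicLevel κ) :=
  monotone_nat_of_le_succ fun m =>
    le_trans (le_mul_of_one_le_left (dyadicLevel_pos κ m).le
      one_lt_three_div_four_mul_sqrt_two.le) (mul_dyadicLevel_le_succ hκ m)

theorem tendsto_dyadicLevel (hκ : ∀ m, κ (m + 1) ≤ κ m + 1) :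
    Tendsto (dyadicLevel κ) atTop atTop :=
  tendsto_atTop_of_geom_le (dyadicLevel_pos κ 0) one_lt_three_div_four_mul_sqrt_two
    (mul_dyadicLevel_le_succ hκ)

end dyadicLevel

theorem sqrt_natCast_pos {n : ℕ} (hn : n ≠ 0) : 0 < √(n : ℝ) :=
  Real.sqrt_pos.2 (Nat.cast_pos.2 (Nat.pos_of_ne_zero hn))

-- `n = 0` gets its own value since dividing by `√0 = 0` would give `0`.
def truncLevel (κ : ℕ → ℕ) (n : ℕ) : ℝ :=
  if n = 0 then 1 else dyadicLevel κ (Nat.log 2 n) / √n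

section truncLevel

variable {κ : ℕ → ℕ}

variable (κ) in
theorem truncLevel_pos (n : ℕ) : 0 < truncLevel κ n := by
  unfold truncLevel
  split_ifs with hn
  · exact one_pos
  · exact div_pos (dyadicLevel_pos κ _) (by positivity)

variable (κ) in
theorem truncLevel_mul_sqrt {n : ℕ} (hn : n ≠ 0) :
    truncLevel κ n * √n = dyadicLevel κ (Nat.log 2 n) := by
  rw [truncLevel, if_neg hn, div_mul_cancel₀ _ (sqrt_natCast_pos hn).ne']

theorem truncLevel_le {n : ℕ} (hn : n ≠ 0) :
    truncLevel κ n ≤ ((κ (Nat.log 2 n) : ℝ) + 3)⁻¹ := by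
  have hpow : √((2 : ℝ) ^ Nat.log 2 n) ≤ √n :=
    Real.sqrt_le_sqrt (by exact_mod_cast Nat.pow_log_le_self 2 hn)
  rw [truncLevel, if_neg hn, dyadicLevel, div_right_comm, ← one_div]
  exact div_le_div_of_nonneg_right ((div_le_one (sqrt_natCast_pos hn)).2 hpow) (by positivity)

theorem tendsto_truncLevel_zero (hκ : Tendsto κ atTop atTop) :
    Tendsto (truncLevel κ) atTop (𝓝 0) := by
  refine squeeze_zero' (Eventually.of_forall fun n => (truncLevel_pos κ n).le)
    ((eventually_ne_atTop 0).mono fun n => truncLevel_le) ?_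
  exact tendsto_inv_atTop_zero.comp <| tendsto_atTop_add_const_right _ _ <|
    tendsto_natCast_atTop_atTop.comp (hκ.comp (tendsto_natLog_atTop one_lt_two))

theorem monotone_truncLevel_mul_sqrt (hκ : Monotone (dyadicLevel κ)) :
    Monotone fun n => truncLevel κ n * √n := by
  intro a b hab
  show truncLevel κ a * √a ≤ truncLevel κ b * √b
  rcases eq_or_ne a 0 with rfl | ha
  · simpa using mul_nonneg (truncLevel_pos κ b).le (Real.sqrt_nonneg b)
  · rw [truncLevel_mul_sqrt κ ha, truncLevel_mul_sqrt κ (by omega)]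
    exact hκ (Nat.log_mono_right hab)

theorem tendsto_truncLevel_mul_sqrt (hκ : Tendsto (dyadicLevel κ) atTop atTop) :
    Tendsto (fun n => truncLevel κ n * √n) atTop atTop :=
  (hκ.comp (tendsto_natLog_atTop one_lt_two)).congr'
    ((eventually_ne_atTop 0).mono fun _ hn => (truncLevel_mul_sqrt κ hn).symm)

end truncLevel

section Ratio

variable {p : ℕ → ℕ} {y : ℝ}

theorem exists_le_mul_of_tendsto_div (hp : Tendsto (fun n => (p n : ℝ) / n) atTop (𝓝 y)) :
    ∃ C : ℝ, ∀ n, 1 ≤ n → (p n : ℝ) ≤ C * n := by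
  obtain ⟨C, hC⟩ := hp.bddAbove_range
  exact ⟨C, fun n hn => (div_le_iff₀ (by exact_mod_cast hn)).1 (hC ⟨n, rfl⟩)⟩

theorem eventually_le_of_two_mul_le (hy : 0 < y)
    (hp : Tendsto (fun n => (p n : ℝ) / n) atTop (𝓝 y)) :
    ∀ᶠ n in atTop, ∀ n', 2 * n ≤ n' → p n ≤ p n' := by
  have hball : ∀ᶠ n in atTop, (p n : ℝ) / n ∈ Set.Ioo (2 / 3 * y) (4 / 3 * y) :=
    hp (Ioo_mem_nhds (by linarith) (by linarith))
  obtain ⟨N, hN⟩ := eventually_atTop.1 (hball.and (eventually_gt_atTop 0))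
  refine eventually_atTop.2 ⟨N, fun n hn n' hn' => ?_⟩
  obtain ⟨⟨-, hlt⟩, hn0⟩ := hN n hn
  obtain ⟨⟨hgt, -⟩, hn0'⟩ := hN n' (by omega)
  have hcast : (2 * n : ℝ) ≤ n' := by exact_mod_cast hn'
  rw [div_lt_iff₀ (by exact_mod_cast hn0)] at hlt
  rw [lt_div_iff₀ (by exact_mod_cast hn0')] at hgt
  exact_mod_cast (by nlinarith : (p n : ℝ) < p n').le

end Ratio

section Tail

variable {Ω E : Type*} [MeasurableSpace Ω] [Norm E] {μ : Measure Ω}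
  {x : ℕ → ℕ → Ω → E} {ξ : Ω → ℝ} {p : ℕ → ℕ} {L : ℝ}

def TailDominated (μ : Measure Ω) (x : ℕ → ℕ → Ω → E) (ξ : Ω → ℝ) (p : ℕ → ℕ) (L : ℝ) :
    Prop :=
  ∀ n : ℕ, 1 ≤ n → ∀ δ : ℝ, 0 < δ →
    ((n : ℝ) * p n)⁻¹ * ∑ j ∈ Finset.range (p n), ∑ l ∈ Finset.range n,
        (μ {ω | δ * Real.sqrt n < ‖x j l ω‖}).toReal ≤
      L * (μ {ω | δ * Real.sqrt n < |ξ ω|}).toReal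

theorem TailDominated.measure_exists_lt_norm_le [IsFiniteMeasure μ]
    (h : TailDominated μ x ξ p L) {n : ℕ} (hn : 1 ≤ n) {t : ℝ} (ht : 0 < t) :
    μ {ω | ∃ j < p n, ∃ l < n, t < ‖x j l ω‖} ≤
      ENNReal.ofReal (n * p n * |L|) * μ {ω | t < |ξ ω|} := by
  have hsqrt : 0 < √(n : ℝ) := Real.sqrt_pos.2 (by exact_mod_cast hn)
  have hδ := h n hn (t / √n) (div_pos ht hsqrt)
  rw [div_mul_cancel₀ _ hsqrt.ne'] at hδ
  set S := ∑ j ∈ Finset.range (p n), ∑ l ∈ Finset.range n, (μ {ω | t < ‖x j l ω‖}).toReal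
  have hS : S ≤ n * p n * |L| * (μ {ω | t < |ξ ω|}).toReal := by
    rcases (p n).eq_zero_or_pos with h0 | hpos
    · simp [S, h0]
    have hnp : (0 : ℝ) < n * p n := by positivity
    rw [inv_mul_le_iff₀ hnp] at hδ
    calc S ≤ n * p n * (L * (μ {ω | t < |ξ ω|}).toReal) := hδ
      _ ≤ n * p n * (|L| * (μ {ω | t < |ξ ω|}).toReal) := by gcongr; exact le_abs_self L
      _ = _ := by ring
  have hunion : {ω | ∃ j < p n, ∃ l < n, t < ‖x j l ω‖} =
      ⋃ j ∈ Finset.range (p n), ⋃ l ∈ Finset.range n, {ω | t < ‖x j l ω‖} := by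
    ext ω; simp
  calc μ {ω | ∃ j < p n, ∃ l < n, t < ‖x j l ω‖}
      ≤ ∑ j ∈ Finset.range (p n), ∑ l ∈ Finset.range n, μ {ω | t < ‖x j l ω‖} := by
        rw [hunion]
        exact (measure_biUnion_finset_le _ _).trans
          (Finset.sum_le_sum fun j _ => measure_biUnion_finset_le _ _)
    _ = ENNReal.ofReal S := by
        simp only [S, ENNReal.ofReal_sum_of_nonneg fun _ _ => Finset.sum_nonneg
          fun _ _ => ENNReal.toReal_nonneg, ENNReal.ofReal_sum_of_nonneg
          fun _ _ => ENNReal.toReal_nonneg, ENNReal.ofReal_toReal (measure_ne_top μ _)]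
    _ ≤ _ := by
        rw [← ENNReal.ofReal_toReal (measure_ne_top μ {ω | t < |ξ ω|}),
          ← ENNReal.ofReal_mul (by positivity)]
        exact ENNReal.ofReal_le_ofReal hS

theorem TailDominated.measure_dyadic_block_le [IsFiniteMeasure μ] (h : TailDominated μ x ξ p L)
    {C : ℝ} (hC : ∀ n, 1 ≤ n → (p n : ℝ) ≤ C * n) (m : ℕ) {t : ℝ} (ht : 0 < t) :
    μ {ω | ∃ j < p (2 ^ (m + 2)), ∃ l < 2 ^ (m + 2), t < ‖x j l ω‖} ≤
      ENNReal.ofReal (16 * C * |L|) * (4 ^ m * μ {ω | t < |ξ ω|}) := by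
  have hN : 1 ≤ 2 ^ (m + 2) := Nat.one_le_two_pow
  have hsize : ((2 ^ (m + 2) : ℕ) : ℝ) * p (2 ^ (m + 2)) * |L| ≤ 16 * C * |L| * 4 ^ m := by
    have hpN := hC _ hN
    push_cast at hpN ⊢
    calc (2 : ℝ) ^ (m + 2) * p (2 ^ (m + 2)) * |L|
        ≤ 2 ^ (m + 2) * (C * 2 ^ (m + 2)) * |L| := by gcongr
      _ = 16 * C * |L| * 4 ^ m := by
        rw [show (4 : ℝ) = 2 * 2 by norm_num, mul_pow]
        ring
  refine (h.measure_exists_lt_norm_le hN ht).trans ?_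
  rw [← mul_assoc, ← ENNReal.ofReal_ofNat 4, ← ENNReal.ofReal_pow (by norm_num),
    ← ENNReal.ofReal_mul' (by positivity)]
  gcongr

theorem ae_eventually_norm_le_of_tsum_ne_top (c : ℕ → ℝ)
    (hc : ∑' m, μ {ω | ∃ j < p (2 ^ (m + 2)), ∃ l < 2 ^ (m + 2), c m < ‖x j l ω‖} ≠ ∞)
    (hp : ∀ᶠ n in atTop, ∀ n', 2 * n ≤ n' → p n ≤ p n') :
    ∀ᵐ ω ∂μ, ∀ᶠ n in atTop, ∀ j < p n, ∀ l < n, ‖x j l ω‖ ≤ c (Nat.log 2 n) := by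
  filter_upwards [ae_eventually_notMem hc] with ω hω
  filter_upwards [(tendsto_natLog_atTop one_lt_two).eventually hω, hp] with n hn hpn j hj l hl
  simp only [not_exists, not_and, not_lt] at hn
  have hlt : n < 2 ^ Nat.log 2 n * 2 := pow_succ 2 _ ▸ Nat.lt_pow_succ_log_self one_lt_two n
  have h4 : 2 ^ (Nat.log 2 n + 2) = 2 ^ Nat.log 2 n * 4 := pow_add _ _ _
  exact hn j (hj.trans_le (hpn _ (by omega))) l (by omega)

end Tail

theorem truncation_almost_surely_general
    {Ω : Type*} [MeasurableSpace Ω] (μ : Measure Ω) [IsProbabilityMeasure μ]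
    (x : ℕ → ℕ → Ω → ℍ[ℝ]) (ξ : Ω → ℝ) (p : ℕ → ℕ) (L y : ℝ)
    (hξ4 : Integrable (fun ω => |ξ ω| ^ 4) μ)
    (htail : ∀ n : ℕ, 1 ≤ n → ∀ δ : ℝ, 0 < δ →
      ((n : ℝ) * p n)⁻¹ * ∑ j ∈ Finset.range (p n), ∑ l ∈ Finset.range n,
          (μ {ω | δ * Real.sqrt n < ‖x j l ω‖}).toReal ≤
        L * (μ {ω | δ * Real.sqrt n < |ξ ω|}).toReal)
    (hy : 0 < y)
    (hp : Tendsto (fun n => (p n : ℝ) / n) atTop (𝓝 y)) :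
    ∃ δ : ℕ → ℝ,
      (∀ n, 0 < δ n) ∧
      Tendsto δ atTop (𝓝 0) ∧
      Monotone (fun n => δ n * Real.sqrt n) ∧
      Tendsto (fun n => δ n * Real.sqrt n) atTop atTop ∧
      ∀ᵐ ω ∂μ, ∀ᶠ n in atTop, ∀ j < p n, ∀ l < n, ‖x j l ω‖ ≤ δ n * Real.sqrt n := by
  obtain ⟨C, hC⟩ := exists_le_mul_of_tendsto_div hp
  obtain ⟨κ, hκ1, hκ, hsum⟩ := ENNReal.exists_tendsto_atTop_tsum_ne_top
    (fun k m => 4 ^ m * μ {ω | √(2 ^ m) / ((k : ℝ) + 3) < |ξ ω|})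
    fun k => tsum_four_pow_mul_measure_lt_abs_ne_top hξ4 (by positivity)
  have hblocks : ∑' m, μ {ω | ∃ j < p (2 ^ (m + 2)), ∃ l < 2 ^ (m + 2),
      dyadicLevel κ m < ‖x j l ω‖} ≠ ∞ := by
    refine ne_top_of_le_ne_top
      (ENNReal.mul_ne_top (ENNReal.ofReal_ne_top (r := 16 * C * |L|)) hsum) ?_
    rw [← ENNReal.tsum_mul_left]
    exact ENNReal.tsum_le_tsum fun m =>
      TailDominated.measure_dyadic_block_le htail hC m (dyadicLevel_pos κ m)
  refine ⟨truncLevel κ, truncLevel_pos κ, tendsto_truncLevel_zero hκ,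
    monotone_truncLevel_mul_sqrt (monotone_dyadicLevel hκ1),
    tendsto_truncLevel_mul_sqrt (tendsto_dyadicLevel hκ1), ?_⟩
  filter_upwards [ae_eventually_norm_le_of_tsum_ne_top _ hblocks
    (eventually_le_of_two_mul_le hy hp)] with ω hω
  filter_upwards [hω, eventually_ne_atTop 0] with n hn hn0
  rwa [truncLevel_mul_sqrt κ hn0]

/-- **Truncation step.** Under the tail-domination condition (4) and `p/n → y ∈ (0,∞)`,
there is a sequence `δₙ → 0` of positive reals with `δₙ√n` nondecreasing to `∞` such that,
with probability one, `‖x_{jl}‖ > δₙ√n` for some `j ≤ p`, `l ≤ n` happens for only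
finitely many `n`. -/
theorem truncation_almost_surely
    {Ω : Type*} [MeasurableSpace Ω] (μ : Measure Ω) [IsProbabilityMeasure μ]
    (x : ℕ → ℕ → Ω → ℍ[ℝ]) (ξ : Ω → ℝ) (p : ℕ → ℕ) (L y : ℝ)
    (hmeas : ∀ j l, Measurable (x j l))
    (hξmeas : Measurable ξ)
    (hξ4 : Integrable (fun ω => |ξ ω| ^ 4) μ)
    (htail : ∀ n : ℕ, 1 ≤ n → ∀ δ : ℝ, 0 < δ →
      ((n : ℝ) * p n)⁻¹ * ∑ j ∈ Finset.range (p n), ∑ l ∈ Finset.range n,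
          (μ {ω | δ * Real.sqrt n < ‖x j l ω‖}).toReal ≤
        L * (μ {ω | δ * Real.sqrt n < |ξ ω|}).toReal)
    (hy : 0 < y)
    (hp : Tendsto (fun n => (p n : ℝ) / n) atTop (𝓝 y)) :
    ∃ δ : ℕ → ℝ,
      (∀ n, 0 < δ n) ∧
      Tendsto δ atTop (𝓝 0) ∧
      Monotone (fun n => δ n * Real.sqrt n) ∧
      Tendsto (fun n => δ n * Real.sqrt n) atTop atTop ∧
      ∀ᵐ ω ∂μ, ∀ᶠ n in atTop, ∀ j < p n, ∀ l < n, ‖x j l ω‖ ≤ δ n * Real.sqrt n :=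
  truncation_almost_surely_general μ x ξ p L y hξ4 htail hy hp

end
end

section
/- If ξ is a real random variable with E|ξ|⁴ < ∞, then there exists a nonincreasing sequence of positive reals δ_{2^k} → 0 such that 2^{k/2}·δ_{2^k} is nondecreasing to ∞ and Σ_{k=1}^∞ δ_{2^k}^{−4} · 2^{2k} · P(|ξ| > δ_{2^k}·2^{k/2}) < ∞. -/
open MeasureTheory Filter Topology

/-!
Write `a m = 4^m P(|ξ|^4 > 4^m)`; since `E|ξ|^4 < ∞` this is summable (layer cake). Take
`δ_{2^k} = 2^{-s_k/2}` for an integer "level" `s_k` that grows by at most one per step, so that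
the threshold `2^{k/2} δ_{2^k} = 2^{(k - s_k)/2}` is nondecreasing, and the `k`-th term equals
`16^{s_k} a (k - s_k)`. Letting the level reach `j` only once `k - j ≥ N j`, where the tail of `a`
beyond `N j` is small compared with `16^{-j}`, makes the series converge.
-/

open Finset in
theorem sum_range_ite_pow_lt_le {r x : ℝ} (hr : 1 < r) (hx : 0 ≤ x) (n : ℕ) :
    ∑ m ∈ range n, (if r ^ m < x then r ^ m else 0) ≤ r / (r - 1) * x := by
  rw [sum_ite, sum_const_zero, add_zero]
  set F := (range n).filter fun m => r ^ m < x
  rcases F.eq_empty_or_nonempty with hF | hF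
  · rw [hF, sum_empty]
    positivity
  set M := F.max' hF
  have hM : r ^ M < x := (mem_filter.1 (F.max'_mem hF)).2
  have hFM : F ⊆ range (M + 1) := fun m hm => mem_range_succ_iff.2 (F.le_max' m hm)
  calc ∑ m ∈ F, r ^ m ≤ ∑ m ∈ range (M + 1), r ^ m :=
        sum_le_sum_of_subset_of_nonneg hFM fun m _ _ => by positivity
    _ = (r ^ (M + 1) - 1) / (r - 1) := geom_sum_eq hr.ne' _
    _ ≤ r ^ (M + 1) / (r - 1) := by gcongr; linarith
    _ = r / (r - 1) * r ^ M := by ring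
    _ ≤ r / (r - 1) * x := by gcongr

theorem summable_pow_mul_measureReal_lt {Ω : Type*} [MeasurableSpace Ω] {μ : Measure Ω}
    {X : Ω → ℝ} (hX₀ : ∀ ω, 0 ≤ X ω) (hX : Integrable X μ) {r : ℝ} (hr : 1 < r) :
    Summable fun m : ℕ => r ^ m * μ.real {ω | r ^ m < X ω} := by
  have hmeas (m : ℕ) : NullMeasurableSet {ω | r ^ m < X ω} μ :=
    nullMeasurableSet_lt aemeasurable_const hX.aemeasurable
  set g : ℕ → Ω → ℝ := fun m => {ω | r ^ m < X ω}.indicator fun _ => r ^ m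
  have hg_apply (m : ℕ) (ω : Ω) : g m ω = if r ^ m < X ω then r ^ m else 0 := rfl
  have hg_int (m : ℕ) : Integrable (g m) μ := by
    refine hX.mono' (aestronglyMeasurable_const.indicator₀ (hmeas m)) (ae_of_all _ fun ω => ?_)
    rw [hg_apply]
    split_ifs with h
    · rw [Real.norm_of_nonneg (by positivity)]; exact h.le
    · simpa using hX₀ ω
  have hg_integral (m : ℕ) : ∫ ω, g m ω ∂μ = r ^ m * μ.real {ω | r ^ m < X ω} := by
    rw [integral_indicator₀ (hmeas m), setIntegral_const, smul_eq_mul, mul_comm]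
  refine summable_of_sum_range_le (fun m => by positivity) (c := r / (r - 1) * ∫ ω, X ω ∂μ)
    fun n => ?_
  calc ∑ m ∈ Finset.range n, r ^ m * μ.real {ω | r ^ m < X ω}
      = ∫ ω, ∑ m ∈ Finset.range n, g m ω ∂μ := by
        simp only [integral_finsetSum _ fun m _ => hg_int m, hg_integral]
    _ ≤ ∫ ω, r / (r - 1) * X ω ∂μ :=
        integral_mono (integrable_finsetSum _ fun m _ => hg_int m) (hX.const_mul _)
          fun ω => by simpa only [hg_apply] using sum_range_ite_pow_lt_le hr (hX₀ ω) n
    _ = r / (r - 1) * ∫ ω, X ω ∂μ := integral_const_mul _ _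

theorem exists_summable_mul_tsum_nat_add (a w : ℕ → ℝ) :
    ∃ N : ℕ → ℕ, N 0 = 0 ∧ Summable fun j => w j * ∑' i, a (i + N j) := by
  have h (j : ℕ) : ∃ n, ‖w j * ∑' i, a (i + n)‖ ≤ (1 / 2) ^ j := by
    have htail : Tendsto (fun n => w j * ∑' i, a (i + n)) atTop (𝓝 0) := by
      simpa using (tendsto_sum_nat_add a).const_mul (w j)
    exact ((tendsto_zero_iff_norm_tendsto_zero.1 htail).eventually
      (ge_mem_nhds (by positivity))).exists
  choose M hM using h
  refine ⟨fun j => if j = 0 then 0 else M j, rfl,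
    Summable.of_norm_bounded_eventually_nat summable_geometric_two ?_⟩
  filter_upwards [eventually_ne_atTop 0] with j hj
  simpa only [hj, if_false] using hM j

theorem summable_mul_sub_of_summable_mul_tsum_nat_add {a w : ℕ → ℝ} {N s : ℕ → ℕ}
    (ha₀ : ∀ m, 0 ≤ a m) (hw : ∀ j, 0 ≤ w j) (ha : Summable a)
    (hN : Summable fun j => w j * ∑' i, a (i + N j)) (hs : ∀ k, s k + N (s k) ≤ k) :
    Summable fun k => w (s k) * a (k - s k) := by
  set F : ℕ × ℕ → ℝ := fun p => w p.1 * a (p.2 + N p.1)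
  have hF : Summable F := (summable_prod_of_nonneg fun p => mul_nonneg (hw _) (ha₀ _)).2
    ⟨fun j => ((summable_nat_add_iff (N j)).2 ha).mul_left (w j),
      by simpa only [F, tsum_mul_left] using hN⟩
  have hinj : Function.Injective fun k => (s k, k - s k - N (s k)) := by
    intro k k' hkk'
    obtain ⟨h₁, h₂⟩ := Prod.mk.inj hkk'
    have hk := hs k
    rw [h₁] at h₂ hk
    have := hs k'
    omega
  refine (hF.comp_injective hinj).congr fun k => ?_
  have := hs k
  simp only [F, Function.comp_apply, Nat.sub_add_cancel (Nat.le_sub_of_add_le' this)]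

def slowLevel (N : ℕ → ℕ) : ℕ → ℕ
  | 0 => 0
  | k + 1 =>
    if N (slowLevel N k + 1) + 2 * (slowLevel N k + 1) ≤ k + 1 then slowLevel N k + 1
    else slowLevel N k

section slowLevel

variable (N : ℕ → ℕ)

theorem slowLevel_le_succ (k : ℕ) : slowLevel N k ≤ slowLevel N (k + 1) := by
  rw [slowLevel]; split_ifs <;> omega

theorem slowLevel_succ_le (k : ℕ) : slowLevel N (k + 1) ≤ slowLevel N k + 1 := by
  rw [slowLevel]; split_ifs <;> omega

theorem monotone_slowLevel : Monotone (slowLevel N) :=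
  monotone_nat_of_le_succ (slowLevel_le_succ N)

theorem monotone_sub_slowLevel : Monotone fun k => k - slowLevel N k :=
  monotone_nat_of_le_succ fun k => by have := slowLevel_succ_le N k; omega

theorem add_two_mul_slowLevel_le (hN : N 0 = 0) (k : ℕ) :
    N (slowLevel N k) + 2 * slowLevel N k ≤ k := by
  induction k with
  | zero => simp [slowLevel, hN]
  | succ k ih =>
    rw [slowLevel]
    split_ifs with h
    · exact h
    · omega

theorem tendsto_slowLevel : Tendsto (slowLevel N) atTop atTop := by
  refine tendsto_atTop_atTop_of_monotone (monotone_slowLevel N) fun j => ?_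
  induction j with
  | zero => exact ⟨0, Nat.zero_le _⟩
  | succ j ih =>
    obtain ⟨k₀, hk₀⟩ := ih
    set k := max k₀ (N (j + 1) + 2 * (j + 1))
    by_cases h : j + 1 ≤ slowLevel N k
    · exact ⟨k, h⟩
    have hj : slowLevel N k = j :=
      le_antisymm (by omega) (hk₀.trans (monotone_slowLevel N (le_max_left _ _)))
    refine ⟨k + 1, ?_⟩
    rw [slowLevel, hj, if_pos (by omega)]

theorem tendsto_sub_slowLevel (hN : N 0 = 0) :
    Tendsto (fun k => k - slowLevel N k) atTop atTop :=
  tendsto_atTop_atTop.2 fun b =>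
    ⟨2 * b, fun k hk => by have := add_two_mul_slowLevel_le N hN k; omega⟩

end slowLevel

theorem exists_monotone_summable_mul_sub {a w : ℕ → ℝ} (ha₀ : ∀ m, 0 ≤ a m)
    (hw : ∀ j, 0 ≤ w j) (ha : Summable a) :
    ∃ s : ℕ → ℕ, Monotone s ∧ Tendsto s atTop atTop ∧
      Monotone (fun k => k - s k) ∧ Tendsto (fun k => k - s k) atTop atTop ∧
      (∀ k, s k ≤ k) ∧ Summable fun k => w (s k) * a (k - s k) := by
  obtain ⟨N, hN₀, hN⟩ := exists_summable_mul_tsum_nat_add a w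
  have hs (k : ℕ) : slowLevel N k + N (slowLevel N k) ≤ k := by
    have := add_two_mul_slowLevel_le N hN₀ k
    omega
  exact ⟨slowLevel N, monotone_slowLevel N, tendsto_slowLevel N, monotone_sub_slowLevel N,
    tendsto_sub_slowLevel N hN₀, fun k => le_of_add_le_left (hs k),
    summable_mul_sub_of_summable_mul_tsum_nat_add ha₀ hw ha hN hs⟩

theorem sqrt_two_pow_four : √2 ^ 4 = 4 := by
  rw [show 4 = 2 * 2 by rfl, pow_mul]
  norm_num

theorem two_rpow_div_two_mul_inv_sqrt_two_pow {j k : ℕ} (h : j ≤ k) :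
    (2 : ℝ) ^ ((k : ℝ) / 2) * (√2)⁻¹ ^ j = √2 ^ (k - j) := by
  have h2 : (2 : ℝ) ^ ((k : ℝ) / 2) = √2 ^ k := by
    rw [Real.sqrt_eq_rpow, ← Real.rpow_natCast, ← Real.rpow_mul (by norm_num)]
    ring_nf
  rw [h2, inv_pow, ← pow_sub₀ _ (by positivity) h]

theorem inv_sqrt_two_pow_inv_pow_four_mul {j k : ℕ} (h : j ≤ k) :
    ((√2)⁻¹ ^ j)⁻¹ ^ 4 * 2 ^ (2 * k) = 16 ^ j * 4 ^ (k - j) := by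
  rw [← inv_pow, inv_inv, pow_right_comm, sqrt_two_pow_four, pow_mul,
    show (16 : ℝ) = 4 * 4 by norm_num, show (2 : ℝ) ^ 2 = 4 by norm_num, mul_pow,
    ← Nat.sub_add_cancel h, pow_add, Nat.add_sub_cancel]
  ring

theorem sqrt_two_pow_lt_iff {y : ℝ} (hy : 0 ≤ y) (m : ℕ) : √2 ^ m < y ↔ 4 ^ m < y ^ 4 := by
  rw [← sqrt_two_pow_four, pow_right_comm,
    pow_lt_pow_iff_left₀ (by positivity) hy four_ne_zero]

theorem truncation_sequence_exists_general
    {Ω : Type*} [MeasurableSpace Ω] (μ : Measure Ω) (ξ : Ω → ℝ)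
    (hξ4 : Integrable (fun ω => |ξ ω| ^ 4) μ) :
    ∃ δ : ℕ → ℝ,
      (∀ k, 0 < δ k) ∧
      Antitone δ ∧
      Tendsto δ atTop (𝓝 0) ∧
      Monotone (fun k : ℕ => (2 : ℝ) ^ ((k : ℝ) / 2) * δ k) ∧
      Tendsto (fun k : ℕ => (2 : ℝ) ^ ((k : ℝ) / 2) * δ k) atTop atTop ∧
      Summable (fun k => (δ k)⁻¹ ^ 4 * 2 ^ (2 * k) *
        (μ {ω | δ k * (2 : ℝ) ^ ((k : ℝ) / 2) < |ξ ω|}).toReal) := by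
  set a : ℕ → ℝ := fun m => 4 ^ m * μ.real {ω | 4 ^ m < |ξ ω| ^ 4}
  have ha : Summable a :=
    summable_pow_mul_measureReal_lt (fun ω => by positivity) hξ4 (by norm_num)
  obtain ⟨s, hs_mono, hs_tendsto, hsub_mono, hsub_tendsto, hs_le, hsum⟩ :=
    exists_monotone_summable_mul_sub (w := (16 ^ ·)) (fun m => by positivity)
      (fun j => by positivity) ha
  have hthreshold (k : ℕ) : (2 : ℝ) ^ ((k : ℝ) / 2) * (√2)⁻¹ ^ s k = √2 ^ (k - s k) :=
    two_rpow_div_two_mul_inv_sqrt_two_pow (hs_le k)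
  refine ⟨fun k => (√2)⁻¹ ^ s k, fun k => by positivity, ?_, ?_, ?_, ?_, ?_⟩
  · exact fun k k' hkk' => pow_le_pow_of_le_one (by positivity)
      (inv_le_one_of_one_le₀ Real.one_lt_sqrt_two.le) (hs_mono hkk')
  · exact (tendsto_pow_atTop_nhds_zero_of_lt_one (by positivity)
      (inv_lt_one_of_one_lt₀ Real.one_lt_sqrt_two)).comp hs_tendsto
  · simp only [hthreshold]
    exact (pow_right_mono₀ Real.one_lt_sqrt_two.le).comp hsub_mono
  · simp only [hthreshold]
    exact (tendsto_pow_atTop_atTop_of_one_lt Real.one_lt_sqrt_two).comp hsub_tendsto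
  · have hterm (k : ℕ) : ((√2)⁻¹ ^ s k)⁻¹ ^ 4 * 2 ^ (2 * k) *
        (μ {ω | (√2)⁻¹ ^ s k * (2 : ℝ) ^ ((k : ℝ) / 2) < |ξ ω|}).toReal
        = 16 ^ s k * a (k - s k) := by
      rw [mul_comm ((√2)⁻¹ ^ s k), hthreshold, inv_sqrt_two_pow_inv_pow_four_mul (hs_le k),
        mul_assoc]
      simp only [a, sqrt_two_pow_lt_iff (abs_nonneg _), measureReal_def]
    simpa only [hterm] using hsum

/-- **(4.10).** If `ξ` is a real random variable with `E|ξ|⁴ < ∞`, then there is a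
nonincreasing sequence of positive reals `δ_{2^k} → 0` with `2^{k/2} δ_{2^k}`
nondecreasing to `∞` such that
`Σ_k δ_{2^k}^{−4} 2^{2k} P(|ξ| > δ_{2^k} 2^{k/2}) < ∞`. -/
theorem truncation_sequence_exists
    {Ω : Type*} [MeasurableSpace Ω] (μ : Measure Ω) [IsProbabilityMeasure μ]
    (ξ : Ω → ℝ) (hξmeas : Measurable ξ)
    (hξ4 : Integrable (fun ω => |ξ ω| ^ 4) μ) :
    ∃ δ : ℕ → ℝ,
      (∀ k, 0 < δ k) ∧
      Antitone δ ∧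
      Tendsto δ atTop (𝓝 0) ∧
      Monotone (fun k : ℕ => (2 : ℝ) ^ ((k : ℝ) / 2) * δ k) ∧
      Tendsto (fun k : ℕ => (2 : ℝ) ^ ((k : ℝ) / 2) * δ k) atTop atTop ∧
      Summable (fun k => (δ k)⁻¹ ^ 4 * 2 ^ (2 * k) *
        (μ {ω | δ k * (2 : ℝ) ^ ((k : ℝ) / 2) < |ξ ω|}).toReal) :=
  truncation_sequence_exists_general μ ξ hξ4
end
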